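/- arXiv:2403.02802 — 5 statements merged into one kernel-verified Lean document; each statement's English description precedes it below -/
import Mathlib

section
/- Let p, q, c be real numbers with 0 < q ≤ p < 1 and 0 < c ≤ 1. For t ∈ [0,1] define f(t) = 2 − (p^t q^{1−t} + q^t p^{1−t})·c − (1−pc)^t (1−qc)^{1−t} − (1−qc)^t (1−pc)^{1−t}. Then the supremum of f over [0,1] is attained at t = 1/2 and equals 2·(1 − √(pq)·c − √((1−pc)(1−qc))). -/
/-!
Both bracketed sums in `f` have the form `x ^ t * y ^ (1 - t) + y ^ t * x ^ (1 - t)`. The two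
summands multiply to `x * y` for every `t`, so by AM-GM the sum is at least `2 * √(x * y)`, with
equality at `t = 1 / 2` where the summands coincide. Since `c ≥ 0`, both sums being minimal at
`t = 1 / 2` makes `f` maximal there.
-/

namespace Real

lemma rpow_half_mul_rpow_half {x y : ℝ} (hx : 0 ≤ x) (hy : 0 ≤ y) :
    x ^ (1 / 2 : ℝ) * y ^ (1 / 2 : ℝ) = √(x * y) := by
  rw [← mul_rpow hx hy, sqrt_eq_rpow]

lemma rpow_mul_rpow_one_sub_mul_swap {x y : ℝ} (hx : 0 ≤ x) (hy : 0 ≤ y) (t : ℝ) :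
    x ^ t * y ^ (1 - t) * (y ^ t * x ^ (1 - t)) = x * y := by
  have hsum : t + (1 - t) ≠ 0 := by norm_num
  calc x ^ t * y ^ (1 - t) * (y ^ t * x ^ (1 - t))
      = x ^ t * x ^ (1 - t) * (y ^ t * y ^ (1 - t)) := by ring
    _ = x * y := by rw [← rpow_add' hx hsum, ← rpow_add' hy hsum]; norm_num

lemma two_mul_sqrt_mul_le_rpow_add_rpow {x y : ℝ} (hx : 0 ≤ x) (hy : 0 ≤ y) (t : ℝ) :
    2 * √(x * y) ≤ x ^ t * y ^ (1 - t) + y ^ t * x ^ (1 - t) := by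
  have hamgm := geom_mean_le_arith_mean2_weighted (w₁ := 1 / 2) (w₂ := 1 / 2)
    (p₁ := x ^ t * y ^ (1 - t)) (p₂ := y ^ t * x ^ (1 - t))
    (by norm_num) (by norm_num) (by positivity) (by positivity) (by norm_num)
  rw [rpow_half_mul_rpow_half (by positivity) (by positivity),
    rpow_mul_rpow_one_sub_mul_swap hx hy] at hamgm
  linarith

lemma rpow_add_rpow_at_half {x y : ℝ} (hx : 0 ≤ x) (hy : 0 ≤ y) :
    x ^ (1 / 2 : ℝ) * y ^ (1 - 1 / 2 : ℝ) + y ^ (1 / 2 : ℝ) * x ^ (1 - 1 / 2 : ℝ)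
      = 2 * √(x * y) := by
  norm_num only
  rw [rpow_half_mul_rpow_half hx hy, rpow_half_mul_rpow_half hy hx, mul_comm y x]
  ring

end Real

/-- For `0 < q ≤ p < 1` and `0 < c ≤ 1`, the function
`f(t) = 2 − (p^t q^{1−t} + q^t p^{1−t})·c − (1−pc)^t (1−qc)^{1−t} − (1−qc)^t (1−pc)^{1−t}`
attains its supremum over `[0,1]` at `t = 1/2`, where it equals
`2·(1 − √(pq)·c − √((1−pc)(1−qc)))`. -/
theorem sup_CH_divergence_at_half (p q c : ℝ)
    (hq : 0 < q) (hqp : q ≤ p) (hp : p < 1) (hc : 0 < c) (hc1 : c ≤ 1)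
    (f : ℝ → ℝ)
    (hf : ∀ t : ℝ, f t =
      2 - (p ^ t * q ^ (1 - t) + q ^ t * p ^ (1 - t)) * c
        - (1 - p * c) ^ t * (1 - q * c) ^ (1 - t)
        - (1 - q * c) ^ t * (1 - p * c) ^ (1 - t)) :
    IsGreatest (f '' Set.Icc (0:ℝ) 1) (f (1/2)) ∧
      f (1/2) = 2 * (1 - Real.sqrt (p * q) * c
        - Real.sqrt ((1 - p * c) * (1 - q * c))) := by
  have hp0 : 0 ≤ p := hq.le.trans hqp
  have hpc : 0 ≤ 1 - p * c := by nlinarith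
  have hqc : 0 ≤ 1 - q * c := by nlinarith
  have hval : f (1 / 2) = 2 * (1 - √(p * q) * c - √((1 - p * c) * (1 - q * c))) := by
    rw [hf, sub_sub, Real.rpow_add_rpow_at_half hpc hqc, Real.rpow_add_rpow_at_half hp0 hq.le]
    ring
  refine ⟨⟨⟨1 / 2, by norm_num, rfl⟩, ?_⟩, hval⟩
  rintro _ ⟨t, -, rfl⟩
  have hpq := Real.two_mul_sqrt_mul_le_rpow_add_rpow hp0 hq.le t
  have hcompl := Real.two_mul_sqrt_mul_le_rpow_add_rpow hpc hqc t
  have hpqc := mul_le_mul_of_nonneg_right hpq hc.le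
  rw [hf t, hval]
  linarith
end

section
/- Let b ≥ 2 be an integer and let γ ∈ (0, 1/4]. Then the finite sum ∑_{k=2}^{b−1} (C(b,k) − b) · γ^k · (1−γ)^{b−k} is at least 1 − (1−γ)^b · (1 + 2bγ), where C(b,k) denotes the binomial coefficient. -/
/-!
With `x = 1 - γ`, the binomial expansion of `(γ + x) ^ b = 1` turns the claim into
`∑_{k=1}^{b} γ^k x^(b-k) ≤ 2 γ x^b` (up to a nonnegative `(b - 1) γ^b`). The left side is
`γ (x^b - γ^b) / (x - γ)`, and `x - γ = 1 - 2γ ≥ 1/2` exactly because `γ ≤ 1/4`.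
-/

open Finset

theorem sum_range_succ_eq_add_add_sum_Icc_add {M : Type*} [AddCommMonoid M] (f : ℕ → M)
    {n : ℕ} (hn : 2 ≤ n) :
    ∑ k ∈ range (n + 1), f k = f 0 + f 1 + ∑ k ∈ Icc 2 (n - 1), f k + f n := by
  obtain ⟨m, rfl⟩ : ∃ m, n = m + 2 := ⟨n - 2, by omega⟩
  rw [sum_range_succ, sum_range_succ', sum_range_succ', ← Ico_add_one_right_eq_Icc,
    sum_Ico_eq_sum_range]
  simp only [show m + 2 - 1 + 1 - 2 = m by omega, add_comm 2]
  abel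

theorem sum_choose_sub_mul_pow_mul_pow {R : Type*} [CommRing R] {x y : R} (h : x + y = 1)
    (n : ℕ) :
    ∑ k ∈ range (n + 1), ((n.choose k : R) - n) * x ^ k * y ^ (n - k) =
      1 - n * ∑ k ∈ range (n + 1), x ^ k * y ^ (n - k) := by
  have hbinom : ∑ k ∈ range (n + 1), x ^ k * y ^ (n - k) * n.choose k = 1 := by
    rw [← add_pow, h, one_pow]
  rw [← hbinom, mul_sum, ← sum_sub_distrib]
  exact sum_congr rfl fun k _ => by ring

theorem sum_range_succ_pow_mul_pow_eq_pow_add_mul {R : Type*} [CommSemiring R] (x y : R)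
    (n : ℕ) :
    ∑ k ∈ range (n + 1), x ^ k * y ^ (n - k) =
      y ^ n + x * ∑ k ∈ range n, x ^ k * y ^ (n - 1 - k) := by
  rw [sum_range_succ', mul_sum, add_comm]
  congr 1
  · simp
  · refine sum_congr rfl fun k _ => ?_
    rw [show n - (k + 1) = n - 1 - k by omega, pow_succ']
    ring

theorem geom_sum₂_le_pow_div_sub {𝕜 : Type*} [Field 𝕜] [LinearOrder 𝕜] [IsStrictOrderedRing 𝕜]
    {x y : 𝕜} (hy : 0 ≤ y) (hyx : y < x) (n : ℕ) :
    ∑ i ∈ range n, y ^ i * x ^ (n - 1 - i) ≤ x ^ n / (x - y) := by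
  rw [le_div_iff₀ (sub_pos.mpr hyx), geom_sum₂_comm, geom_sum₂_mul]
  exact sub_le_self _ (pow_nonneg hy n)

open Finset in
/-- For an integer `b ≥ 2` and `γ ∈ (0, 1/4]`,
`∑_{k=2}^{b−1} (C(b,k) − b) γ^k (1−γ)^{b−k} ≥ 1 − (1−γ)^b (1 + 2bγ)`. -/
theorem sum_binom_lower_bound (b : ℕ) (hb : 2 ≤ b) (γ : ℝ)
    (hγ : 0 < γ) (hγ4 : γ ≤ 1/4) :
    1 - (1 - γ) ^ b * (1 + 2 * b * γ) ≤
      ∑ k ∈ Finset.Icc 2 (b - 1),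
        ((b.choose k : ℝ) - (b : ℝ)) * γ ^ k * (1 - γ) ^ (b - k) := by
  have hgeom : ∑ k ∈ range b, γ ^ k * (1 - γ) ^ (b - 1 - k) ≤ 2 * (1 - γ) ^ b :=
    calc _ ≤ (1 - γ) ^ b / (1 - γ - γ) := geom_sum₂_le_pow_div_sub hγ.le (by linarith) b
      _ ≤ 2 * (1 - γ) ^ b := by
        rw [div_le_iff₀ (by linarith)]
        nlinarith [pow_nonneg (by linarith : (0 : ℝ) ≤ 1 - γ) b]
  have htotal := sum_choose_sub_mul_pow_mul_pow (add_sub_cancel γ 1) b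
  rw [sum_range_succ_eq_add_add_sum_Icc_add _ hb,
    sum_range_succ_pow_mul_pow_eq_pow_add_mul] at htotal
  simp only [Nat.choose_zero_right, Nat.choose_one_right, Nat.choose_self, sub_self,
    Nat.sub_zero, Nat.sub_self, pow_zero, Nat.cast_one, zero_mul, mul_one] at htotal
  have hb1 : (1 : ℝ) ≤ b := by exact_mod_cast (by omega : 1 ≤ b)
  nlinarith [mul_le_mul_of_nonneg_left hgeom (by positivity : (0 : ℝ) ≤ b * γ),
    mul_nonneg (sub_nonneg.mpr hb1) (pow_nonneg hγ.le b)]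
end

section
/- Let m ≥ 1 be an integer and let a₁,…,a_m, b₁,…,b_m be strictly positive real numbers. On a probability space, let P₁,…,P_m, Q₁,…,Q_m be mutually independent random variables with P_i Poisson-distributed with mean a_i and Q_i Poisson-distributed with mean b_i. Define Y = ∑_{i=1}^m log(a_i/b_i)·(Q_i − P_i). Then for every real u, P(Y ≥ −u) ≤ e^{u/2} · exp( − ∑_{i=1}^m (√(a_i) − √(b_i))² ). -/
/-!
Chernoff's bound with parameter `1/2`: `P(Y ≥ -u) ≤ e^{u/2} E[e^{Y/2}]`, and by independence
`E[e^{Y/2}]` is the product of the Poisson moment generating functions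
`E[e^{sN}] = exp(μ(e^s - 1))` at `s = ∓ log(a_i/b_i)/2`. Since `e^{∓ log(a_i/b_i)/2}` is
`√b_i/√a_i`, resp. `√a_i/√b_i`, the exponents add up to `2√(a_i b_i) - a_i - b_i = -(√a_i - √b_i)²`.

The `P_i, Q_i` need not be measurable, so expectations are replaced by sums over the countably
many values of the random vector, and all estimates are made with the outer measure.
-/

open MeasureTheory ProbabilityTheory Real

theorem ENNReal.tsum_pi_prod {ι : Type*} [Fintype ι] {α : Type*} (g : ι → α → ENNReal) :
    ∑' v : ι → α, ∏ i, g i (v i) = ∏ i, ∑' x, g i x := by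
  revert g
  refine Fintype.induction_empty_option (P := fun ι _ => ∀ g : ι → α → ENNReal,
    ∑' v : ι → α, ∏ i, g i (v i) = ∏ i, ∑' x, g i x) ?_ ?_ ?_ ι
  · intro ι κ _ e h g
    let := Fintype.ofEquiv κ e.symm
    rw [← (e.arrowCongr (Equiv.refl α)).tsum_eq, ← Fintype.prod_equiv e _ _ (fun _ => rfl)]
    refine (tsum_congr fun v => ?_).trans (h _)
    exact Fintype.prod_equiv e.symm _ _ (fun k => by simp)
  · simp
  · intro ι _ h g
    rw [← (Equiv.piOptionEquivProd (β := fun _ => α)).symm.tsum_eq, ENNReal.tsum_prod',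
      Fintype.prod_option, ← h, ← ENNReal.tsum_mul_right]
    simp [Fintype.prod_option, ENNReal.tsum_mul_left]

theorem ENNReal.ofReal_exp_sum {ι : Type*} (s : Finset ι) (f : ι → ℝ) :
    ENNReal.ofReal (exp (∑ i ∈ s, f i)) = ∏ i ∈ s, ENNReal.ofReal (exp (f i)) := by
  rw [exp_sum, ENNReal.ofReal_prod_of_nonneg fun i _ => (exp_pos _).le]

theorem Real.exp_half_log_div {a b : ℝ} (ha : 0 < a) (hb : 0 < b) :
    exp (log (a / b) / 2) = √a / √b := by
  rw [exp_half, exp_log (div_pos ha hb), sqrt_div' _ hb.le]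

theorem Real.mul_sqrt_div_sub_one_add_mul_sqrt_div_sub_one {a b : ℝ} (ha : 0 < a) (hb : 0 < b) :
    a * (√b / √a - 1) + b * (√a / √b - 1) = -(√a - √b) ^ 2 := by
  have hsa := (sqrt_pos.2 ha).ne'
  have hsb := (sqrt_pos.2 hb).ne'
  field_simp
  linear_combination (√a - √b) * √b * sq_sqrt ha.le - (√a - √b) * √a * sq_sqrt hb.le

theorem tsum_ofReal_exp_mul_mul_poisson {μ : ℝ} (hμ : 0 ≤ μ) (s : ℝ) :
    ∑' k : ℕ, ENNReal.ofReal (exp (s * k)) * ENNReal.ofReal (exp (-μ) * μ ^ k / k.factorial) =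
      ENNReal.ofReal (exp (μ * (exp s - 1))) := by
  have hterm : ∀ k : ℕ, ENNReal.ofReal (exp (s * k)) *
      ENNReal.ofReal (exp (-μ) * μ ^ k / k.factorial) =
      ENNReal.ofReal (exp (-μ) * ((μ * exp s) ^ k / k.factorial)) := by
    intro k
    rw [← ENNReal.ofReal_mul (exp_pos _).le, mul_comm s, exp_nat_mul, mul_pow]
    ring_nf
  have hexp : ∑' k : ℕ, (μ * exp s) ^ k / k.factorial = exp (μ * exp s) := by
    rw [exp_eq_exp_ℝ, NormedSpace.exp_eq_tsum_div]
  rw [tsum_congr hterm, ← ENNReal.ofReal_tsum_of_nonneg (fun k => by positivity)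
    ((summable_pow_div_factorial _).mul_left _), tsum_mul_left, hexp, ← exp_add]
  ring_nf

section

variable {Ω : Type*} [MeasurableSpace Ω] {P : Measure Ω}

theorem measure_preimage_le_tsum_mul {α : Type*} [Countable α] (X : Ω → α) {s : Set α}
    {w : α → ENNReal} (hw : ∀ x ∈ s, 1 ≤ w x) :
    P (X ⁻¹' s) ≤ ∑' x, w x * P (X ⁻¹' {x}) :=
  calc P (X ⁻¹' s) ≤ P (⋃ x, X ⁻¹' ({x} ∩ s)) :=
        measure_mono fun ω hω => Set.mem_iUnion.2 ⟨X ω, rfl, hω⟩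
    _ ≤ ∑' x, P (X ⁻¹' ({x} ∩ s)) := measure_iUnion_le _
    _ ≤ ∑' x, w x * P (X ⁻¹' {x}) := by
        refine ENNReal.tsum_le_tsum fun x => ?_
        by_cases hx : x ∈ s
        · rw [Set.singleton_inter_of_mem hx]
          exact le_mul_of_one_le_left (by positivity) (hw x hx)
        · simp [Set.singleton_inter_of_notMem hx]

namespace ProbabilityTheory.iIndepFun

theorem measure_forall_eq {ι : Type*} [Fintype ι] {β : ι → Type*}
    [∀ i, MeasurableSpace (β i)] [∀ i, MeasurableSingletonClass (β i)] {f : ∀ i, Ω → β i}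
    (hf : iIndepFun f P) (v : ∀ i, β i) :
    P {ω | ∀ i, f i ω = v i} = ∏ i, P {ω | f i ω = v i} := by
  have h := hf.measure_inter_preimage_eq_mul Finset.univ (fun i _ => measurableSet_singleton (v i))
  simpa [Set.preimage, Set.iInter_ofPred] using h

theorem measure_sum_ge_le_exp_mul_prod_tsum {ι : Type*} [Fintype ι] {α : Type*} [Countable α]
    [MeasurableSpace α] [MeasurableSingletonClass α] {f : ι → Ω → α} (hf : iIndepFun f P)
    (g : ι → α → ℝ) (t : ℝ) :
    P {ω | t ≤ ∑ i, g i (f i ω)} ≤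
      ENNReal.ofReal (exp (-t)) * ∏ i, ∑' x, ENNReal.ofReal (exp (g i x)) * P {ω | f i ω = x} := by
  have hw : ∀ v ∈ {v : ι → α | t ≤ ∑ i, g i (v i)},
      1 ≤ ENNReal.ofReal (exp (-t)) * ∏ i, ENNReal.ofReal (exp (g i (v i))) := by
    intro v (hv : t ≤ _)
    rw [← ENNReal.ofReal_exp_sum, ← ENNReal.ofReal_mul (exp_pos _).le, ← exp_add]
    exact ENNReal.one_le_ofReal.2 (one_le_exp (by linarith))
  calc P {ω | t ≤ ∑ i, g i (f i ω)}
      ≤ ∑' v : ι → α, (ENNReal.ofReal (exp (-t)) * ∏ i, ENNReal.ofReal (exp (g i (v i)))) *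
          P ((fun ω i => f i ω) ⁻¹' {v}) := measure_preimage_le_tsum_mul _ hw
    _ = ENNReal.ofReal (exp (-t)) *
          ∑' v : ι → α, ∏ i, ENNReal.ofReal (exp (g i (v i))) * P {ω | f i ω = v i} := by
        simp only [Set.preimage, Set.mem_singleton_iff, funext_iff, hf.measure_forall_eq,
          mul_assoc, ENNReal.tsum_mul_left, Finset.prod_mul_distrib]
    _ = _ := congrArg _ (ENNReal.tsum_pi_prod
          fun i x => ENNReal.ofReal (exp (g i x)) * P {ω | f i ω = x})

end ProbabilityTheory.iIndepFun

end

theorem poisson_linear_comb_tail_general {Ω : Type*} [MeasurableSpace Ω]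
    (P : Measure Ω) [IsProbabilityMeasure P]
    (m : ℕ) (a b : Fin m → ℝ)
    (ha : ∀ i, 0 < a i) (hb : ∀ i, 0 < b i)
    (Pv Qv : Fin m → Ω → ℕ)
    (hPv : ∀ i, ∀ k : ℕ, P {ω | Pv i ω = k} =
      ENNReal.ofReal (Real.exp (-(a i)) * (a i) ^ k / (Nat.factorial k)))
    (hQv : ∀ i, ∀ k : ℕ, P {ω | Qv i ω = k} =
      ENNReal.ofReal (Real.exp (-(b i)) * (b i) ^ k / (Nat.factorial k)))
    (hindep : iIndepFun
      (Sum.elim Pv Qv) P)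
    (Y : Ω → ℝ)
    (hY : ∀ ω, Y ω = ∑ i, Real.log (a i / b i) * ((Qv i ω : ℝ) - (Pv i ω : ℝ)))
    (u : ℝ) :
    P {ω | -u ≤ Y ω} ≤
      ENNReal.ofReal (Real.exp (u / 2) *
        Real.exp (-(∑ i, (Real.sqrt (a i) - Real.sqrt (b i)) ^ 2))) := by
  set X : Fin m ⊕ Fin m → Ω → ℕ := Sum.elim Pv Qv
  set μ : Fin m ⊕ Fin m → ℝ := Sum.elim a b
  set l : Fin m ⊕ Fin m → ℝ :=
    Sum.elim (fun i => -log (a i / b i) / 2) (fun i => log (a i / b i) / 2)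
  have hμ : ∀ j, 0 ≤ μ j := by rintro (i | i); exacts [(ha i).le, (hb i).le]
  have hlaw : ∀ j k, P {ω | X j ω = k} = ENNReal.ofReal (exp (-μ j) * μ j ^ k / k.factorial) := by
    rintro (i | i) k; exacts [hPv i k, hQv i k]
  have hhalf : ∀ ω, ∑ j, l j * X j ω = Y ω / 2 := by
    intro ω
    rw [hY, Finset.sum_div, Fintype.sum_sum_type, ← Finset.sum_add_distrib]
    refine Finset.sum_congr rfl fun i _ => ?_
    simp only [X, l, Sum.elim_inl, Sum.elim_inr]
    ring
  have hevent : {ω | -u ≤ Y ω} = {ω | -u / 2 ≤ ∑ j, l j * X j ω} := by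
    simp only [hhalf, div_le_div_iff_of_pos_right (two_pos : (0 : ℝ) < 2)]
  have hexponent : ∑ j, μ j * (exp (l j) - 1) = -∑ i, (√(a i) - √(b i)) ^ 2 := by
    simp only [Fintype.sum_sum_type, μ, l, Sum.elim_inl, Sum.elim_inr, ← Finset.sum_add_distrib,
      ← Finset.sum_neg_distrib, neg_div, exp_neg, exp_half_log_div (ha _) (hb _), inv_div,
      mul_sqrt_div_sub_one_add_mul_sqrt_div_sub_one (ha _) (hb _)]
  calc P {ω | -u ≤ Y ω} = P {ω | -u / 2 ≤ ∑ j, l j * X j ω} := by rw [hevent]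
    _ ≤ ENNReal.ofReal (exp (u / 2)) *
          ∏ j, ∑' k : ℕ, ENNReal.ofReal (exp (l j * k)) * P {ω | X j ω = k} := by
        simpa only [neg_div, neg_neg] using
          hindep.measure_sum_ge_le_exp_mul_prod_tsum (fun j k => l j * k) (-u / 2)
    _ = ENNReal.ofReal (exp (u / 2)) * ∏ j, ENNReal.ofReal (exp (μ j * (exp (l j) - 1))) := by
        simp only [hlaw, tsum_ofReal_exp_mul_mul_poisson (hμ _)]
    _ = _ := by
        rw [← ENNReal.ofReal_exp_sum, hexponent, ENNReal.ofReal_mul (exp_pos _).le]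

/-- Chernoff tail bound for
`Y = ∑_{i=1}^m log(a_i/b_i)·(Q_i − P_i)` where the `P_i, Q_i` are mutually
independent Poisson random variables with means `a_i` and `b_i`:
`P(Y ≥ −u) ≤ e^{u/2} · exp(−∑_i (√a_i − √b_i)²)` for every real `u`. -/
theorem poisson_linear_comb_tail {Ω : Type*} [MeasurableSpace Ω]
    (P : Measure Ω) [IsProbabilityMeasure P]
    (m : ℕ) (hm : 1 ≤ m) (a b : Fin m → ℝ)
    (ha : ∀ i, 0 < a i) (hb : ∀ i, 0 < b i)
    (Pv Qv : Fin m → Ω → ℕ)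
    (hPv : ∀ i, ∀ k : ℕ, P {ω | Pv i ω = k} =
      ENNReal.ofReal (Real.exp (-(a i)) * (a i) ^ k / (Nat.factorial k)))
    (hQv : ∀ i, ∀ k : ℕ, P {ω | Qv i ω = k} =
      ENNReal.ofReal (Real.exp (-(b i)) * (b i) ^ k / (Nat.factorial k)))
    (hindep : iIndepFun
      (Sum.elim Pv Qv) P)
    (Y : Ω → ℝ)
    (hY : ∀ ω, Y ω = ∑ i, Real.log (a i / b i) * ((Qv i ω : ℝ) - (Pv i ω : ℝ)))
    (u : ℝ) :
    P {ω | -u ≤ Y ω} ≤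
      ENNReal.ofReal (Real.exp (u / 2) *
        Real.exp (-(∑ i, (Real.sqrt (a i) - Real.sqrt (b i)) ^ 2))) :=
  poisson_linear_comb_tail_general P m a b ha hb Pv Qv hPv hQv hindep Y hY u
end

section
/- Let p, q, ψ be real numbers with 0 < q < p < 1 and 0 < ψ ≤ 1. Then −2·log( √(pq)·ψ + √((1 − pψ)(1 − qψ)) ) ≥ ψ·(√p − √q)². -/
/-! The left-hand side is `-2 log BC`, where `BC = √(pq) ψ + √((1-pψ)(1-qψ))` is the
Bhattacharyya coefficient of the Bernoulli laws with parameters `pψ` and `qψ`.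
AM-GM on its second term gives `BC ≤ 1 - ψ (√p - √q)² / 2`, and `log x ≤ x - 1` finishes. -/

namespace Real

theorem sqrt_mul_le_add_div_two {x y : ℝ} (hx : 0 ≤ x) (hy : 0 ≤ y) :
    √(x * y) ≤ (x + y) / 2 := by
  rw [sqrt_mul hx]
  nlinarith [sq_sqrt hx, sq_sqrt hy, sq_nonneg (√x - √y)]

theorem sqrt_mul_mul_add_sqrt_mul_le {p q ψ : ℝ} (hp : 0 ≤ p) (hq : 0 ≤ q)
    (hpψ : p * ψ ≤ 1) (hqψ : q * ψ ≤ 1) :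
    √(p * q) * ψ + √((1 - p * ψ) * (1 - q * ψ)) ≤ 1 - ψ * (√p - √q) ^ 2 / 2 := by
  have hAMGM := sqrt_mul_le_add_div_two (sub_nonneg.2 hpψ) (sub_nonneg.2 hqψ)
  have hexpand : ψ * (√p - √q) ^ 2 = p * ψ + q * ψ - 2 * (√p * √q * ψ) := by
    linear_combination ψ * sq_sqrt hp + ψ * sq_sqrt hq
  rw [sqrt_mul hp]
  linarith

end Real

/-- For `0 < q < p < 1` and `0 < ψ ≤ 1`,
`−2·log(√(pq)·ψ + √((1−pψ)(1−qψ))) ≥ ψ·(√p − √q)²`. -/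
theorem neg_two_log_ge_hellinger (p q ψ : ℝ)
    (hq : 0 < q) (hqp : q < p) (hp : p < 1) (hψ : 0 < ψ) (hψ1 : ψ ≤ 1) :
    ψ * (Real.sqrt p - Real.sqrt q) ^ 2 ≤
      -2 * Real.log (Real.sqrt (p * q) * ψ
        + Real.sqrt ((1 - p * ψ) * (1 - q * ψ))) := by
  have hp0 : 0 < p := hq.trans hqp
  have hpψ : p * ψ ≤ 1 := mul_le_one₀ hp.le hψ.le hψ1
  have hqψ : q * ψ ≤ 1 := mul_le_one₀ (hqp.trans hp).le hψ.le hψ1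
  have hBC_pos : 0 < √(p * q) * ψ + √((1 - p * ψ) * (1 - q * ψ)) := by positivity
  have hBC_le := Real.sqrt_mul_mul_add_sqrt_mul_le hp0.le hq.le hpψ hqψ
  have hlog := Real.log_le_sub_one_of_pos hBC_pos
  linarith
end

section
/- Let p, q, ε, ψ be real numbers with 0 < q < p < 1 and 0 < ε ≤ ψ ≤ 1. Then (pψ)^{3/2}/(qψ)^{1/2} + (1 − pψ)^{3/2}/(1 − qψ)^{1/2} ≤ p^{3/2}/q^{1/2} + (1 − pε)^{3/2}/(1 − q)^{1/2}. -/
/-!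
Compare the two sides term by term. The factor `ψ` comes out of the first term with exponent
`3/2 - 1/2 = 1`, so that term equals `ψ · p^{3/2}/q^{1/2} ≤ p^{3/2}/q^{1/2}`. In the second term the
numerator `1 - pψ` only grows when `ψ` is lowered to `ε`, and the denominator `1 - qψ` only shrinks
when `ψ` is raised to `1`.
-/

namespace Real

theorem mul_rpow_div_mul_rpow {a b t : ℝ} (ha : 0 ≤ a) (hb : 0 ≤ b) (ht : 0 < t) (r s : ℝ) :
    (a * t) ^ r / (b * t) ^ s = a ^ r / b ^ s * t ^ (r - s) := by
  rw [mul_rpow ha ht.le, mul_rpow hb ht.le, mul_div_mul_comm, ← rpow_sub ht]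

theorem mul_rpow_div_mul_rpow_le {a b t r s : ℝ} (ha : 0 ≤ a) (hb : 0 ≤ b) (ht₀ : 0 < t)
    (ht₁ : t ≤ 1) (hsr : s ≤ r) :
    (a * t) ^ r / (b * t) ^ s ≤ a ^ r / b ^ s := by
  rw [mul_rpow_div_mul_rpow ha hb ht₀]
  exact mul_le_of_le_one_right (by positivity) (rpow_le_one ht₀.le ht₁ (sub_nonneg.2 hsr))

theorem rpow_div_rpow_le_rpow_div_rpow {x x' y y' r s : ℝ} (hx : 0 ≤ x) (hxx' : x ≤ x')
    (hy' : 0 < y') (hy'y : y' ≤ y) (hr : 0 ≤ r) (hs : 0 ≤ s) :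
    x ^ r / y ^ s ≤ x' ^ r / y' ^ s :=
  div_le_div₀ (rpow_nonneg (hx.trans hxx') r) (rpow_le_rpow hx hxx' hr) (by positivity)
    (rpow_le_rpow hy'.le hy'y hs)

end Real

/-- For `0 < q < p < 1` and `0 < ε ≤ ψ ≤ 1`,
`(pψ)^{3/2}/(qψ)^{1/2} + (1−pψ)^{3/2}/(1−qψ)^{1/2}
  ≤ p^{3/2}/q^{1/2} + (1−pε)^{3/2}/(1−q)^{1/2}`. -/
theorem renyi_three_half_upper_bound (p q ε ψ : ℝ)
    (hq : 0 < q) (hqp : q < p) (hp : p < 1)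
    (hε : 0 < ε) (hεψ : ε ≤ ψ) (hψ1 : ψ ≤ 1) :
    (p * ψ) ^ ((3:ℝ)/2) / (q * ψ) ^ ((1:ℝ)/2)
        + (1 - p * ψ) ^ ((3:ℝ)/2) / (1 - q * ψ) ^ ((1:ℝ)/2) ≤
      p ^ ((3:ℝ)/2) / q ^ ((1:ℝ)/2)
        + (1 - p * ε) ^ ((3:ℝ)/2) / (1 - q) ^ ((1:ℝ)/2) := by
  have hψ : 0 < ψ := hε.trans_le hεψ
  have hp₀ : 0 < p := hq.trans hqp
  have hpψ : 0 ≤ 1 - p * ψ := by nlinarith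
  have hnum : 1 - p * ψ ≤ 1 - p * ε := by nlinarith
  have hden : 1 - q ≤ 1 - q * ψ := by nlinarith
  gcongr ?_ + ?_
  · exact Real.mul_rpow_div_mul_rpow_le hp₀.le hq.le hψ hψ1 (by norm_num)
  · exact Real.rpow_div_rpow_le_rpow_div_rpow hpψ hnum (by linarith) hden (by norm_num)
      (by norm_num)
end
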